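/- arXiv:2406.12205 — 2 statements merged into one kernel-verified Lean document; each statement's English description precedes it below -/
import Mathlib

section
/- Instance-dependent upper bound for RL-LOW (Theorem 1): There exists a constant C_up > 0 depending only on L such that for every consistent offline RLHF instance v there is a threshold n₀ with the following property: for every sample size n ≥ n₀ such that n·N_{k,i,j} ∈ ℕ for all (k,i,j), and for every measurable choice of outputs î_k ∈ Î_k, the expected simple regret of RL-LOW satisfies E[R_n] ≤ exp(−n/(C_up·H(v))). -/
open MeasureTheory ProbabilityTheory Real

namespace RLHF

/-- The logistic sigmoid function. -/
noncomputable def sigmoid (x : ℝ) : ℝ := Real.exp x / (1 + Real.exp x)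

/-- Clipping to the interval `[1/(1+e^{2L}), e^{2L}/(1+e^{2L})]`. -/
noncomputable def clip (L x : ℝ) : ℝ :=
  max (1 / (1 + Real.exp (2 * L))) (min (Real.exp (2 * L) / (1 + Real.exp (2 * L))) x)

/-- The logit (log-odds) function. -/
noncomputable def logit (x : ℝ) : ℝ := Real.log (x / (1 - x))

/-- An offline RLHF instance: state distribution, feature map, parameter vector and
sampling proportions. -/
structure Inst (S A d : ℕ) where
  ρ : Fin S → ℝ
  φ : Fin S → Fin A → EuclideanSpace ℝ (Fin d)
  θ : EuclideanSpace ℝ (Fin d)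
  N : Fin S → Fin A → Fin A → ℝ
  ρ_pos : ∀ k, 0 < ρ k
  ρ_sum : ∑ k, ρ k = 1
  N_nonneg : ∀ k i j, 0 ≤ N k i j
  N_sum : ∑ k, ∑ i, ∑ j, N k i j = 1
  φ_ne : ∀ k i j, i ≠ j → φ k i ≠ φ k j

namespace Inst

variable {S A d : ℕ}

/-- The reward of action `i` in state `k`. -/
noncomputable def r (v : Inst S A d) (k : Fin S) (i : Fin A) : ℝ :=
  @inner ℝ _ _ (v.φ k i) v.θ

/-- The span of the sampled feature differences. -/
def W (v : Inst S A d) : Submodule ℝ (EuclideanSpace ℝ (Fin d)) :=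
  Submodule.span ℝ {x | ∃ k i j, 0 < v.N k i j ∧ x = v.φ k i - v.φ k j}

/-- Consistency of an instance. -/
def Consistent (v : Inst S A d) : Prop :=
  ∀ k i j, v.φ k i - v.φ k j ∈ v.W

/-- `istar` assigns to each state its unique best action. -/
def BestAction (v : Inst S A d) (istar : Fin S → Fin A) : Prop :=
  ∀ k j, j ≠ istar k → v.r k j < v.r k (istar k)

/-- The suboptimality gap. -/
noncomputable def gap (v : Inst S A d) (istar : Fin S → Fin A) (k : Fin S) (i : Fin A) : ℝ :=
  v.r k (istar k) - v.r k i

/-- The objective value of a candidate weight vector. -/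
noncomputable def cost (v : Inst S A d) (u : Fin S → Fin A → Fin A → ℝ) : ℝ :=
  ∑ k', ∑ i', ∑ j', if 0 < v.N k' i' j' then (u k' i' j') ^ 2 / v.N k' i' j' else 0

/-- Feasibility of a weight vector for the pair `(i,j)` in state `k`: it vanishes where
`N` vanishes and expresses `φ(k,i) − φ(k,j)` as a linear combination of sampled feature
differences. -/
def Feasible (v : Inst S A d) (k : Fin S) (i j : Fin A)
    (u : Fin S → Fin A → Fin A → ℝ) : Prop :=
  (∀ k' i' j', v.N k' i' j' = 0 → u k' i' j' = 0) ∧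
  v.φ k i - v.φ k j = ∑ k', ∑ i', ∑ j', u k' i' j' • (v.φ k' i' - v.φ k' j')

/-- `w` is a locally optimal weight vector for `(k,i,j)`. -/
def IsLOW (v : Inst S A d) (k : Fin S) (i j : Fin A)
    (w : Fin S → Fin A → Fin A → ℝ) : Prop :=
  v.Feasible k i j w ∧ ∀ u, v.Feasible k i j u → v.cost w ≤ v.cost u

/-- `γ̃_{k,i}`-type quantity: weighted sum of absolute weights over `1/√N`. -/
noncomputable def gammaTilde (v : Inst S A d) (u : Fin S → Fin A → Fin A → ℝ) : ℝ :=
  ∑ k', ∑ i', ∑ j',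
    if 0 < v.N k' i' j' then |u k' i' j'| / Real.sqrt (v.N k' i' j') else 0

/-- `γ^DP`-type quantity. -/
noncomputable def gammaDP (v : Inst S A d) (u : Fin S → Fin A → Fin A → ℝ) : ℝ :=
  ∑ k', ∑ i', ∑ j',
    if 0 < v.N k' i' j' then (u k' i' j' / v.N k' i' j') ^ 2 else 0

/-- `γ̃^DP`-type quantity. -/
noncomputable def gammaTildeDP (v : Inst S A d) (u : Fin S → Fin A → Fin A → ℝ) : ℝ :=
  ∑ k', ∑ i', ∑ j',
    if 0 < v.N k' i' j' then |u k' i' j'| / v.N k' i' j' else 0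

/-- The hardness parameter `H(v)`, where `w k i j` denotes the locally optimal weights
for the triple `(k,i,j)`. -/
noncomputable def H (v : Inst S A d) (istar : Fin S → Fin A)
    (w : Fin S → Fin A → Fin A → Fin S → Fin A → Fin A → ℝ) : ℝ :=
  sSup {x | ∃ k i, i ≠ istar k ∧
    x = v.cost (w k i (istar k)) / (v.gap istar k i) ^ 2}

/-- The DP hardness parameter `H_DP^{(ε,δ)}(v)`. -/
noncomputable def HDP (v : Inst S A d) (istar : Fin S → Fin A)
    (w : Fin S → Fin A → Fin A → Fin S → Fin A → Fin A → ℝ) (ε δ : ℝ) : ℝ :=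
  sSup {x | ∃ k i, i ≠ istar k ∧
    x = Real.sqrt (Real.log (1.25 / δ) * v.gammaDP (w k i (istar k))) /
        (Real.sqrt ε * v.gap istar k i)}

/-- The empirical success proportion `B_{k,i,j}` computed from counts `y`. -/
noncomputable def B (v : Inst S A d) (n : ℕ) (y : Fin S → Fin A → Fin A → ℕ)
    (k : Fin S) (i j : Fin A) : ℝ :=
  if 0 < v.N k i j then (y k i j : ℝ) / (n * v.N k i j) else 0

/-- The RL-LOW relative reward estimate `r̂_{k,i,j}` computed from counts `y`. -/
noncomputable def rhat (v : Inst S A d) (L : ℝ) (n : ℕ)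
    (w : Fin S → Fin A → Fin A → Fin S → Fin A → Fin A → ℝ)
    (y : Fin S → Fin A → Fin A → ℕ) (k : Fin S) (i j : Fin A) : ℝ :=
  if i = j then 0 else
    ∑ k', ∑ i', ∑ j', w k i j k' i' j' * logit (clip L (v.B n y k' i' j'))

/-- The DP-RL-LOW private relative reward estimate `r̃_{k,i,j}` computed from counts `y`
and Gaussian noise realizations `z`. -/
noncomputable def rtilde (v : Inst S A d) (L : ℝ) (n : ℕ)
    (w : Fin S → Fin A → Fin A → Fin S → Fin A → Fin A → ℝ)
    (y : Fin S → Fin A → Fin A → ℕ) (z : Fin S → Fin A → Fin A → ℝ)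
    (k : Fin S) (i j : Fin A) : ℝ :=
  if i = j then 0 else
    ∑ k', ∑ i', ∑ j', w k i j k' i' j' *
      logit (clip L
        (if 0 < v.N k' i' j' then
          (y k' i' j' : ℝ) / (n * v.N k' i' j') + z k' i' j' else 0))

/-- Simple regret of the action assignment `ihat` (using the best actions `istar`). -/
noncomputable def regret (v : Inst S A d) (istar : Fin S → Fin A)
    (ihat : Fin S → Fin A) : ℝ :=
  ∑ k, v.ρ k * (v.r k (istar k) - v.r k (ihat k))

/-- Simple regret of the action assignment `ihat` (via suprema of rewards; this does not
require the best action to be unique). -/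
noncomputable def regretSup (v : Inst S A d) (ihat : Fin S → Fin A) : ℝ :=
  ∑ k, v.ρ k * ((⨆ j, v.r k j) - v.r k (ihat k))

end Inst

/-- `Y` has the binomial law with `m` trials and success probability `p` under `P`. -/
def HasBinomialLaw {Ω : Type*} [MeasurableSpace Ω] (P : Measure Ω)
    (Y : Ω → ℕ) (m : ℕ) (p : ℝ) : Prop :=
  ∀ t : ℕ, P {ω | Y ω = t} =
    ENNReal.ofReal ((m.choose t : ℝ) * p ^ t * (1 - p) ^ (m - t))

/-- The data model of offline RLHF with pairwise comparisons: for each triple `(k,i,j)`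
with `N_{k,i,j} > 0`, the count `Y k i j` is binomial with `n·N_{k,i,j}` trials and
success probability `σ(r_{k,i} − r_{k,j})`, and these counts are independent. -/
def IsBTLSample {S A d : ℕ} (v : Inst S A d) (n : ℕ) {Ω : Type*} [MeasurableSpace Ω]
    (P : Measure Ω) (Y : Fin S → Fin A → Fin A → Ω → ℕ) : Prop :=
  (∀ k i j, Measurable (Y k i j)) ∧
  (∀ k i j, 0 < v.N k i j →
    HasBinomialLaw P (Y k i j) ⌈(n : ℝ) * v.N k i j⌉₊
      (sigmoid (v.r k i - v.r k j))) ∧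
  iIndepFun (m := fun _ => (inferInstance : MeasurableSpace ℝ))
    (fun (t : {t : Fin S × Fin A × Fin A // 0 < v.N t.1 t.2.1 t.2.2}) =>
      fun ω => (Y t.1.1 t.1.2.1 t.1.2.2 ω : ℝ)) P

/-- The data model of DP-RL-LOW: on top of the BTL counts, for each triple with
`N_{k,i,j} > 0` there is Gaussian noise `ξ k i j` of mean `0` and variance
`2·log(1.25/δ)/(ε·n·N_{k,i,j})²`, and all counts and noises are jointly independent. -/
def IsDPSample {S A d : ℕ} (v : Inst S A d) (n : ℕ) (ε δ : ℝ) {Ω : Type*}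
    [MeasurableSpace Ω] (P : Measure Ω)
    (Y : Fin S → Fin A → Fin A → Ω → ℕ) (ξ : Fin S → Fin A → Fin A → Ω → ℝ) : Prop :=
  (∀ k i j, Measurable (Y k i j)) ∧
  (∀ k i j, Measurable (ξ k i j)) ∧
  (∀ k i j, 0 < v.N k i j →
    HasBinomialLaw P (Y k i j) ⌈(n : ℝ) * v.N k i j⌉₊
      (sigmoid (v.r k i - v.r k j))) ∧
  (∀ k i j, 0 < v.N k i j →
    P.map (ξ k i j) =
      gaussianReal 0
        (Real.toNNReal (2 * Real.log (1.25 / δ) / (ε * n * v.N k i j) ^ 2))) ∧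
  iIndepFun (m := fun _ => (inferInstance : MeasurableSpace ℝ))
    (fun (t : {t : Fin S × Fin A × Fin A // 0 < v.N t.1 t.2.1 t.2.2} ⊕
              {t : Fin S × Fin A × Fin A // 0 < v.N t.1 t.2.1 t.2.2}) =>
      Sum.elim
        (fun t => fun ω => (Y t.1.1 t.1.2.1 t.1.2.2 ω : ℝ))
        (fun t => ξ t.1.1 t.1.2.1 t.1.2.2) t) P

end RLHF

open RLHF

/-!
On the sampled triples `t`, RL-LOW's estimate `r̂_{k,i,i*}` is the combination with weights
`w_t = w^{(k,i,i*)}_t` of the clipped log-odds `logit (clip B_t)`, and feasibility of `w` makes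
the same combination of the true log-odds `r_{t,1} - r_{t,2}` equal to `-Δ_{k,i}`. As `|r| ≤ L`,
every true success probability `p_t` lies in the clipping interval, on which `logit ∘ clip` is
`M`-Lipschitz with `M = 2 (1 + e^{2L})`; so RL-LOW can only output a suboptimal `i` in state `k`
if `Δ_{k,i} ≤ ∑_t M |w_t| |B_t - p_t|`. Each `B_t` is a binomial proportion with
`E exp (c (B_t - p_t)) ≤ exp (c² / (n N_t))`, and the `B_t` are independent, so a Chernoff bound
gives this event probability at most
`2^{#t} exp (-n Δ² / (4 M² γ)) ≤ 2^{#t} exp (-n / (4 M² H))`.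
Summing over `(k, i)` bounds the expected regret by `2 L |A| 2^{#t} exp (-n / (4 M² H))`, and
for large `n` the prefactor is absorbed by halving the exponent, whence `C_up = 8 M²`.
-/

namespace RLHF

open Finset

lemma sigmoid_eq_real_sigmoid : sigmoid = Real.sigmoid := by
  funext x
  rw [sigmoid, Real.sigmoid_def, Real.exp_neg]
  field_simp
  ring

lemma clip_eq (L x : ℝ) :
    clip L x = max (Real.sigmoid (-(2 * L))) (min (Real.sigmoid (2 * L)) x) := by
  have h₁ : 1 / (1 + exp (2 * L)) = Real.sigmoid (-(2 * L)) := by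
    rw [Real.sigmoid_def, neg_neg, one_div]
  have h₂ : exp (2 * L) / (1 + exp (2 * L)) = Real.sigmoid (2 * L) := by
    rw [← sigmoid_eq_real_sigmoid, sigmoid]
  rw [clip, h₁, h₂]

lemma clip_mem_Icc {L : ℝ} (hL : 0 ≤ L) (x : ℝ) :
    clip L x ∈ Set.Icc (Real.sigmoid (-(2 * L))) (Real.sigmoid (2 * L)) := by
  rw [clip_eq]
  exact ⟨le_max_left _ _, max_le (Real.sigmoid_le (by linarith)) (min_le_left _ _)⟩

lemma clip_of_mem_Icc {L x : ℝ}
    (hx : x ∈ Set.Icc (Real.sigmoid (-(2 * L))) (Real.sigmoid (2 * L))) : clip L x = x := by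
  rw [clip_eq, min_eq_right hx.2, max_eq_right hx.1]

lemma abs_clip_sub_clip_le (L x y : ℝ) : |clip L x - clip L y| ≤ |x - y| := by
  simp only [clip_eq]
  refine (abs_max_sub_max_le_max _ _ _ _).trans ?_
  simpa using abs_min_sub_min_le_max (Real.sigmoid (2 * L)) x (Real.sigmoid (2 * L)) y

lemma logit_sigmoid (x : ℝ) : logit (sigmoid x) = x := by
  have h : sigmoid x / (1 - sigmoid x) = exp x := by
    rw [sigmoid]
    field_simp
    ring
  rw [logit, h, Real.log_exp]

lemma abs_log_sub_log_le {c x y : ℝ} (hc : 0 < c) (hx : c ≤ x) (hy : c ≤ y) :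
    |log x - log y| ≤ |x - y| / c := by
  wlog hxy : y ≤ x generalizing x y
  · rw [abs_sub_comm, abs_sub_comm x]
    exact this hy hx (le_of_not_ge hxy)
  have hy0 : 0 < y := hc.trans_le hy
  have hx0 : 0 < x := hy0.trans_le hxy
  rw [abs_of_nonneg (sub_nonneg.2 (Real.log_le_log hy0 hxy)), abs_of_nonneg (sub_nonneg.2 hxy),
    ← Real.log_div (hy0.trans_le hxy).ne' hy0.ne']
  calc log (x / y) ≤ x / y - 1 := Real.log_le_sub_one_of_pos (by positivity)
    _ = (x - y) / y := by field_simp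
    _ ≤ (x - y) / c := div_le_div_of_nonneg_left (sub_nonneg.2 hxy) hc hy

lemma abs_logit_sub_logit_le {c x y : ℝ} (hc : 0 < c) (hx : x ∈ Set.Icc c (1 - c))
    (hy : y ∈ Set.Icc c (1 - c)) : |logit x - logit y| ≤ 2 / c * |x - y| := by
  have hlogit : ∀ z ∈ Set.Icc c (1 - c), logit z = log z - log (1 - z) := by
    intro z hz
    rw [logit, Real.log_div (hc.trans_le hz.1).ne' (by linarith [hz.2])]
  rw [hlogit x hx, hlogit y hy, sub_sub_sub_comm]
  calc _ ≤ |log x - log y| + |log (1 - x) - log (1 - y)| := abs_sub _ _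
    _ ≤ |x - y| / c + |(1 - x) - (1 - y)| / c :=
        add_le_add (abs_log_sub_log_le hc hx.1 hy.1)
          (abs_log_sub_log_le hc (by linarith [hx.2]) (by linarith [hy.2]))
    _ = 2 / c * |x - y| := by rw [sub_sub_sub_cancel_left, abs_sub_comm]; ring

lemma abs_logit_clip_sub_le {L x : ℝ} (hx : |x| ≤ 2 * L) (b : ℝ) :
    |logit (clip L b) - x| ≤ 2 * (1 + exp (2 * L)) * |b - sigmoid x| := by
  have hL : 0 ≤ L := by linarith [abs_nonneg x]
  have hIcc : Set.Icc (Real.sigmoid (-(2 * L))) (Real.sigmoid (2 * L)) =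
      Set.Icc (Real.sigmoid (-(2 * L))) (1 - Real.sigmoid (-(2 * L))) := by
    rw [Real.sigmoid_neg, sub_sub_cancel]
  have hσx : sigmoid x ∈ Set.Icc (Real.sigmoid (-(2 * L))) (Real.sigmoid (2 * L)) := by
    rw [sigmoid_eq_real_sigmoid]
    exact ⟨Real.sigmoid_le (neg_le_of_abs_le hx), Real.sigmoid_le (le_of_abs_le hx)⟩
  have hM : 2 / Real.sigmoid (-(2 * L)) = 2 * (1 + exp (2 * L)) := by
    rw [Real.sigmoid_def, neg_neg, div_inv_eq_mul]
  calc |logit (clip L b) - x| = |logit (clip L b) - logit (clip L (sigmoid x))| := by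
        rw [clip_of_mem_Icc hσx, logit_sigmoid]
    _ ≤ 2 / Real.sigmoid (-(2 * L)) * |clip L b - clip L (sigmoid x)| :=
        abs_logit_sub_logit_le (Real.sigmoid_pos _) (hIcc ▸ clip_mem_Icc hL b)
          (hIcc ▸ clip_mem_Icc hL _)
    _ ≤ 2 * (1 + exp (2 * L)) * |b - sigmoid x| := by
        rw [hM]
        exact mul_le_mul_of_nonneg_left (abs_clip_sub_clip_le L b _) (by positivity)

lemma exp_le_add_exp_sq (x : ℝ) : exp x ≤ x + exp (x ^ 2) := by
  have hsq := Real.add_one_le_exp (x ^ 2)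
  rcases le_or_gt |x| 1 with hx | hx
  · linarith [(abs_le.1 (Real.abs_exp_sub_one_sub_id_le hx)).2]
  rcases lt_abs.1 hx with hx | hx
  · linarith [Real.exp_le_exp.2 (show x ≤ x ^ 2 by nlinarith)]
  · linarith [Real.exp_le_one_iff.2 (show x ≤ 0 by linarith), show 0 ≤ x ^ 2 + x by nlinarith]

lemma centered_bernoulli_mgf_le {p : ℝ} (hp0 : 0 ≤ p) (hp1 : p ≤ 1) (s : ℝ) :
    exp (-(s * p)) * (1 - p + p * exp s) ≤ exp (s ^ 2) := by
  have hq : 0 ≤ 1 - p := sub_nonneg.2 hp1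
  have hexp : exp (-(s * p)) * (1 - p + p * exp s) =
      (1 - p) * exp (-(s * p)) + p * exp (s * (1 - p)) := by
    rw [mul_add, mul_left_comm, ← Real.exp_add]
    ring_nf
  have hsq : ∀ q, 0 ≤ q → q ≤ 1 → exp ((s * q) ^ 2) ≤ exp (s ^ 2) := fun q h0 h1 =>
    Real.exp_le_exp.2 (by
      rw [mul_pow]
      exact mul_le_of_le_one_right (sq_nonneg s) (pow_le_one₀ h0 h1))
  rw [hexp]
  calc _ ≤ (1 - p) * (-(s * p) + exp (s ^ 2)) + p * (s * (1 - p) + exp (s ^ 2)) := by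
        gcongr
        · exact (exp_le_add_exp_sq _).trans (by rw [neg_sq]; linarith [hsq p hp0 hp1])
        · exact (exp_le_add_exp_sq _).trans (by linarith [hsq (1 - p) hq (by linarith)])
    _ = exp (s ^ 2) := by ring

lemma mul_exp_neg_le_exp_neg_half {K x : ℝ} (hK : 0 ≤ K) (hx : 2 * log K ≤ x) :
    K * exp (-x) ≤ exp (-(x / 2)) := by
  rcases hK.eq_or_lt with rfl | hK
  · simpa using (Real.exp_pos _).le
  rw [← Real.exp_log hK, ← Real.exp_add]
  exact Real.exp_le_exp.2 (by linarith)

namespace HasBinomialLaw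

variable {Ω : Type*} [MeasurableSpace Ω] {P : Measure Ω} {Y : Ω → ℕ} {m : ℕ} {p : ℝ}

lemma ae_le (hY : HasBinomialLaw P Y m p) : ∀ᵐ ω ∂P, Y ω ≤ m := by
  have hset : {ω | ¬Y ω ≤ m} = ⋃ t ∈ Set.Ioi m, {ω | Y ω = t} := by
    ext ω
    simp
  rw [ae_iff, hset, measure_biUnion_null_iff (Set.to_countable _)]
  intro t ht
  rw [hY t, Nat.choose_eq_zero_of_lt ht]
  simp

lemma ae_eq_sum_indicator (hY : HasBinomialLaw P Y m p) (g : ℕ → ℝ) :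
    (fun ω => g (Y ω)) =ᵐ[P]
      fun ω => ∑ y ∈ range (m + 1), {ω | Y ω = y}.indicator (fun _ => g y) ω := by
  filter_upwards [hY.ae_le] with ω hω
  simp [Set.indicator_apply, Nat.lt_succ_of_le hω]

lemma integrable_comp [IsFiniteMeasure P] (hmeas : Measurable Y) (hY : HasBinomialLaw P Y m p)
    (g : ℕ → ℝ) : Integrable (fun ω => g (Y ω)) P :=
  (integrable_finsetSum _ fun y _ =>
    (integrable_const (g y)).indicator (hmeas (measurableSet_singleton y))).congr
    (hY.ae_eq_sum_indicator g).symm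

lemma integral_comp [IsFiniteMeasure P] (hmeas : Measurable Y) (hY : HasBinomialLaw P Y m p)
    (hp0 : 0 ≤ p) (hp1 : p ≤ 1) (g : ℕ → ℝ) :
    ∫ ω, g (Y ω) ∂P =
      ∑ y ∈ range (m + 1), (m.choose y * p ^ y * (1 - p) ^ (m - y)) * g y := by
  have hq : 0 ≤ 1 - p := sub_nonneg.2 hp1
  have hfib : ∀ y, MeasurableSet {ω | Y ω = y} := fun y => hmeas (measurableSet_singleton y)
  rw [integral_congr_ae (hY.ae_eq_sum_indicator g),
    integral_finsetSum _ fun y _ => (integrable_const (g y)).indicator (hfib y)]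
  refine sum_congr rfl fun y _ => ?_
  rw [integral_indicator_const _ (hfib y), measureReal_def, hY y,
    ENNReal.toReal_ofReal (by positivity), smul_eq_mul]

lemma mgf_div_sub_le [IsFiniteMeasure P] (hmeas : Measurable Y) (hY : HasBinomialLaw P Y m p)
    (hp0 : 0 ≤ p) (hp1 : p ≤ 1) (hm : 0 < m) (c : ℝ) :
    mgf (fun ω => (Y ω : ℝ) / m - p) P c ≤ exp (c ^ 2 / m) := by
  have hm' : (m : ℝ) ≠ 0 := by positivity
  obtain ⟨s, rfl⟩ : ∃ s, c = m * s := ⟨c / m, by field_simp⟩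
  have hterm : ∀ y : ℕ, exp (m * s * ((y : ℝ) / m - p)) =
      exp (-(s * p)) ^ m * exp s ^ y := by
    intro y
    rw [← Real.exp_nat_mul, ← Real.exp_nat_mul, ← Real.exp_add]
    congr 1
    field_simp
    ring
  calc mgf (fun ω => (Y ω : ℝ) / m - p) P (m * s)
      = ∑ y ∈ range (m + 1), (m.choose y * p ^ y * (1 - p) ^ (m - y)) *
          exp (m * s * ((y : ℝ) / m - p)) :=
        hY.integral_comp hmeas hp0 hp1 fun y => exp (m * s * ((y : ℝ) / m - p))
    _ = (exp (-(s * p)) * (1 - p + p * exp s)) ^ m := by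
        rw [mul_pow, add_comm (1 - p), add_pow, mul_sum]
        refine sum_congr rfl fun y _ => ?_
        rw [hterm]
        ring
    _ ≤ exp (s ^ 2) ^ m := by
        have hq : 0 ≤ 1 - p := sub_nonneg.2 hp1
        gcongr
        exact centered_bernoulli_mgf_le hp0 hp1 s
    _ = exp ((m * s) ^ 2 / m) := by
        rw [← Real.exp_nat_mul]
        congr 1
        field_simp

lemma mgf_mul_abs_div_sub_le [IsFiniteMeasure P] (hmeas : Measurable Y)
    (hY : HasBinomialLaw P Y m p) (hp0 : 0 ≤ p) (hp1 : p ≤ 1) (hm : 0 < m) (a t : ℝ) :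
    mgf (fun ω => a * |(Y ω : ℝ) / m - p|) P t ≤ 2 * exp ((t * a) ^ 2 / m) := by
  have hexp : ∀ z : ℝ, exp (t * (a * |z|)) ≤
      exp (t * a * z) + exp (-(t * a) * z) := by
    intro z
    rcases abs_cases z with ⟨hz, -⟩ | ⟨hz, -⟩
    · rw [hz, ← mul_assoc]
      linarith [Real.exp_pos (-(t * a) * z)]
    · rw [hz, show t * (a * -z) = -(t * a) * z by ring]
      linarith [Real.exp_pos (t * a * z)]
  have hint : ∀ c : ℝ, Integrable (fun ω => exp (c * ((Y ω : ℝ) / m - p))) P := fun c =>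
    hY.integrable_comp hmeas fun y => exp (c * ((y : ℝ) / m - p))
  calc mgf (fun ω => a * |(Y ω : ℝ) / m - p|) P t
      ≤ ∫ ω, (exp (t * a * ((Y ω : ℝ) / m - p)) +
          exp (-(t * a) * ((Y ω : ℝ) / m - p))) ∂P :=
        integral_mono (hY.integrable_comp hmeas fun y => exp (t * (a * |(y : ℝ) / m - p|)))
          ((hint _).add (hint _)) fun ω => hexp _
    _ = mgf (fun ω => (Y ω : ℝ) / m - p) P (t * a) +
          mgf (fun ω => (Y ω : ℝ) / m - p) P (-(t * a)) := integral_add (hint _) (hint _)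
    _ ≤ exp ((t * a) ^ 2 / m) + exp ((-(t * a)) ^ 2 / m) :=
        add_le_add (hY.mgf_div_sub_le hmeas hp0 hp1 hm _) (hY.mgf_div_sub_le hmeas hp0 hp1 hm _)
    _ = 2 * exp ((t * a) ^ 2 / m) := by rw [neg_sq, two_mul]

end HasBinomialLaw

lemma measureReal_sum_ge_le_of_iIndepFun {Ω ι : Type*} [MeasurableSpace Ω] [Fintype ι]
    {μ : Measure Ω} {X : ι → Ω → ℝ} (hindep : iIndepFun X μ)
    (hmeas : ∀ i, Measurable (X i))
    {t : ℝ} (ht : 0 ≤ t) (hint : ∀ i, Integrable (fun ω => exp (t * X i ω)) μ)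
    {b : ι → ℝ} (hb : ∀ i, mgf (X i) μ t ≤ b i) (ε : ℝ) :
    μ.real {ω | ε ≤ ∑ i, X i ω} ≤ exp (-t * ε) * ∏ i, b i := by
  have := hindep.isProbabilityMeasure
  have h := measure_ge_le_exp_mul_mgf (X := ∑ i, X i) ε ht
    (hindep.integrable_exp_mul_sum hmeas (s := univ) fun i _ => hint i)
  rw [hindep.mgf_sum hmeas] at h
  simp only [Finset.sum_apply] at h
  exact h.trans (mul_le_mul_of_nonneg_left
    (prod_le_prod (fun i _ => mgf_nonneg) fun i _ => hb i) (Real.exp_pos _).le)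

namespace Inst

variable {S A d : ℕ}

lemma nonempty_state (v : Inst S A d) : Nonempty (Fin S) := by
  by_contra h
  rw [not_nonempty_iff] at h
  simpa using v.ρ_sum

variable (v : Inst S A d)

abbrev Sampled : Type := {t : Fin S × Fin A × Fin A // 0 < v.N t.1 t.2.1 t.2.2}

lemma sum_eq_sum_sampled {M : Type*} [AddCommMonoid M] {f : Fin S → Fin A → Fin A → M}
    (hf : ∀ k i j, v.N k i j = 0 → f k i j = 0) :
    ∑ k, ∑ i, ∑ j, f k i j = ∑ t : v.Sampled, f t.1.1 t.1.2.1 t.1.2.2 := by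
  have hsupp : ∀ x ∈ (univ : Finset (Fin S × Fin A × Fin A)), f x.1 x.2.1 x.2.2 ≠ 0 →
      0 < v.N x.1 x.2.1 x.2.2 := fun x _ hx =>
    (v.N_nonneg _ _ _).lt_of_ne' fun h => hx (hf _ _ _ h)
  calc ∑ k, ∑ i, ∑ j, f k i j = ∑ x : Fin S × Fin A × Fin A, f x.1 x.2.1 x.2.2 := by
        simp only [Fintype.sum_prod_type]
    _ = ∑ x ∈ univ.filter fun x : Fin S × Fin A × Fin A => 0 < v.N x.1 x.2.1 x.2.2,
          f x.1 x.2.1 x.2.2 := (sum_filter_of_ne hsupp).symm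
    _ = ∑ t : v.Sampled, f t.1.1 t.1.2.1 t.1.2.2 := sum_subtype _ (by simp) _

lemma sum_ite_eq_sum_sampled (g : Fin S → Fin A → Fin A → ℝ) :
    ∑ k, ∑ i, ∑ j, (if 0 < v.N k i j then g k i j else 0) =
      ∑ t : v.Sampled, g t.1.1 t.1.2.1 t.1.2.2 := by
  rw [v.sum_eq_sum_sampled fun k i j h => by simp [h]]
  exact sum_congr rfl fun t _ => if_pos t.2

lemma cost_eq_sum_sampled (u : Fin S → Fin A → Fin A → ℝ) :
    v.cost u = ∑ t : v.Sampled, u t.1.1 t.1.2.1 t.1.2.2 ^ 2 / v.N t.1.1 t.1.2.1 t.1.2.2 :=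
  v.sum_ite_eq_sum_sampled _

variable {v}

lemma abs_r_sub_r_le {L : ℝ} (hr : ∀ k i, |v.r k i| ≤ L) (k : Fin S) (i j : Fin A) :
    |v.r k i - v.r k j| ≤ 2 * L := by
  linarith [abs_sub (v.r k i) (v.r k j), hr k i, hr k j]

lemma gap_nonneg {istar : Fin S → Fin A} (hbest : v.BestAction istar) (k : Fin S) (i : Fin A) :
    0 ≤ v.gap istar k i := by
  rcases eq_or_ne i (istar k) with rfl | hi
  · simp [gap]
  · exact (sub_pos.2 (hbest k i hi)).le

namespace Feasible

variable {k : Fin S} {i j : Fin A} {u : Fin S → Fin A → Fin A → ℝ}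

lemma sub_eq_sum_sampled (hu : v.Feasible k i j u) :
    v.φ k i - v.φ k j = ∑ t : v.Sampled,
      u t.1.1 t.1.2.1 t.1.2.2 • (v.φ t.1.1 t.1.2.1 - v.φ t.1.1 t.1.2.2) := by
  rw [hu.2, v.sum_eq_sum_sampled fun k' i' j' h => by rw [hu.1 k' i' j' h, zero_smul]]

lemma r_sub_r_eq (hu : v.Feasible k i j u) :
    v.r k i - v.r k j = ∑ t : v.Sampled,
      u t.1.1 t.1.2.1 t.1.2.2 * (v.r t.1.1 t.1.2.1 - v.r t.1.1 t.1.2.2) := by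
  simp only [Inst.r, ← inner_sub_left, hu.sub_eq_sum_sampled, sum_inner, real_inner_smul_left]

lemma cost_pos (hu : v.Feasible k i j u) (hij : i ≠ j) : 0 < v.cost u := by
  rw [cost_eq_sum_sampled]
  have hnonneg : ∀ t : v.Sampled,
      0 ≤ u t.1.1 t.1.2.1 t.1.2.2 ^ 2 / v.N t.1.1 t.1.2.1 t.1.2.2 := fun t => by
    have := t.2
    positivity
  refine (sum_nonneg fun t _ => hnonneg t).lt_of_ne fun h => v.φ_ne k i j hij (sub_eq_zero.1 ?_)
  rw [hu.sub_eq_sum_sampled]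
  refine sum_eq_zero fun t ht => ?_
  have hzero := (sum_eq_zero_iff_of_nonneg fun t _ => hnonneg t).1 h.symm t ht
  rw [div_eq_zero_iff, pow_eq_zero_iff two_ne_zero] at hzero
  rw [hzero.resolve_right t.2.ne', zero_smul]

lemma r_sub_r_le {L : ℝ} (hr : ∀ k i, |v.r k i| ≤ L) (hu : v.Feasible k i j u)
    (b : Fin S → Fin A → Fin A → ℝ)
    (hb : 0 ≤ ∑ k', ∑ i', ∑ j', u k' i' j' * logit (clip L (b k' i' j'))) :
    v.r k j - v.r k i ≤ ∑ t : v.Sampled, 2 * (1 + exp (2 * L)) *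
      |u t.1.1 t.1.2.1 t.1.2.2| *
        |b t.1.1 t.1.2.1 t.1.2.2 - sigmoid (v.r t.1.1 t.1.2.1 - v.r t.1.1 t.1.2.2)| := by
  rw [v.sum_eq_sum_sampled fun k' i' j' h => by rw [hu.1 k' i' j' h, zero_mul]] at hb
  have hterm : ∀ t : v.Sampled,
      u t.1.1 t.1.2.1 t.1.2.2 * logit (clip L (b t.1.1 t.1.2.1 t.1.2.2)) -
        u t.1.1 t.1.2.1 t.1.2.2 * (v.r t.1.1 t.1.2.1 - v.r t.1.1 t.1.2.2) ≤
      2 * (1 + exp (2 * L)) * |u t.1.1 t.1.2.1 t.1.2.2| *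
        |b t.1.1 t.1.2.1 t.1.2.2 - sigmoid (v.r t.1.1 t.1.2.1 - v.r t.1.1 t.1.2.2)| := fun t => by
    rw [← mul_sub]
    refine (le_abs_self _).trans ?_
    rw [abs_mul]
    exact (mul_le_mul_of_nonneg_left (abs_logit_clip_sub_le (abs_r_sub_r_le hr _ _ _) _)
      (abs_nonneg _)).trans_eq (by ring)
  have hsum := sum_le_sum fun t (_ : t ∈ univ) => hterm t
  rw [sum_sub_distrib, ← hu.r_sub_r_eq] at hsum
  linarith

end Feasible

lemma cost_div_gap_sq_le_H (istar : Fin S → Fin A)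
    (w : Fin S → Fin A → Fin A → Fin S → Fin A → Fin A → ℝ) {k : Fin S} {i : Fin A}
    (hki : i ≠ istar k) : v.cost (w k i (istar k)) / v.gap istar k i ^ 2 ≤ v.H istar w := by
  refine le_csSup (Set.Finite.bddAbove ?_) ⟨k, i, hki, rfl⟩
  refine (Set.finite_range fun x : Fin S × Fin A =>
    v.cost (w x.1 x.2 (istar x.1)) / v.gap istar x.1 x.2 ^ 2).subset ?_
  rintro _ ⟨k, i, -, rfl⟩
  exact ⟨(k, i), rfl⟩

variable (v) in
lemma H_pos (hA : 2 ≤ A) {istar : Fin S → Fin A} (hbest : v.BestAction istar)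
    {w : Fin S → Fin A → Fin A → Fin S → Fin A → Fin A → ℝ}
    (hfeas : ∀ k i, i ≠ istar k → v.Feasible k i (istar k) (w k i (istar k))) :
    0 < v.H istar w := by
  obtain ⟨k⟩ := v.nonempty_state
  obtain ⟨i, hi⟩ := Fintype.exists_ne_of_one_lt_card (by rw [Fintype.card_fin]; omega) (istar k)
  exact (div_pos ((hfeas k i hi).cost_pos hi) (pow_pos (sub_pos.2 (hbest k i hi)) 2)).trans_le
    (cost_div_gap_sq_le_H istar w hi)

section Regret

variable {Ω : Type*} [MeasurableSpace Ω] {P : Measure Ω} [IsFiniteMeasure P]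
  {istar : Fin S → Fin A} {ihat : Ω → Fin S → Fin A}

lemma integral_regret_eq (hmeas : ∀ k a, MeasurableSet {ω | ihat ω k = a}) :
    ∫ ω, v.regret istar (ihat ω) ∂P =
      ∑ k, ∑ i, P.real {ω | ihat ω k = i} * (v.ρ k * v.gap istar k i) := by
  have hpt : ∀ ω, v.regret istar (ihat ω) =
      ∑ k, ∑ i, {ω | ihat ω k = i}.indicator (fun _ => v.ρ k * v.gap istar k i) ω := by
    intro ω
    simp [regret, gap, Set.indicator_apply]
  simp_rw [hpt]
  rw [integral_finsetSum _ fun k _ =>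
    integrable_finsetSum _ fun i _ => (integrable_const _).indicator (hmeas k i)]
  refine sum_congr rfl fun k _ => ?_
  rw [integral_finsetSum _ fun i _ => (integrable_const _).indicator (hmeas k i)]
  exact sum_congr rfl fun i _ => integral_indicator_const _ (hmeas k i)

lemma integral_regret_le {L E : ℝ} (hr : ∀ k i, |v.r k i| ≤ L) (hbest : v.BestAction istar)
    (hmeas : ∀ k a, MeasurableSet {ω | ihat ω k = a}) (hE0 : 0 ≤ E)
    (hE : ∀ k i, i ≠ istar k → P.real {ω | ihat ω k = i} ≤ E) :
    ∫ ω, v.regret istar (ihat ω) ∂P ≤ 2 * L * A * E := by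
  have hterm : ∀ k i, P.real {ω | ihat ω k = i} * (v.ρ k * v.gap istar k i) ≤
      v.ρ k * (2 * L * E) := by
    intro k i
    have hgap : P.real {ω | ihat ω k = i} * v.gap istar k i ≤ E * v.gap istar k i := by
      rcases eq_or_ne i (istar k) with rfl | hi
      · simp [gap]
      · exact mul_le_mul_of_nonneg_right (hE k i hi) (gap_nonneg hbest k i)
    have h2L : v.gap istar k i ≤ 2 * L := (le_abs_self _).trans (abs_r_sub_r_le hr _ _ _)
    calc _ = v.ρ k * (P.real {ω | ihat ω k = i} * v.gap istar k i) := by ring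
      _ ≤ v.ρ k * (E * (2 * L)) := mul_le_mul_of_nonneg_left
          (hgap.trans (mul_le_mul_of_nonneg_left h2L hE0)) (v.ρ_pos k).le
      _ = v.ρ k * (2 * L * E) := by ring
  rw [integral_regret_eq hmeas]
  calc _ ≤ ∑ k, ∑ _i : Fin A, v.ρ k * (2 * L * E) :=
        sum_le_sum fun k _ => sum_le_sum fun i _ => hterm k i
    _ = 2 * L * A * E := by
        simp only [sum_const, card_univ, Fintype.card_fin, nsmul_eq_mul, ← mul_sum, ← sum_mul,
          v.ρ_sum]
        ring

end Regret

end Inst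

namespace IsBTLSample

variable {S A d : ℕ} {v : Inst S A d} {n : ℕ} {Ω : Type*} [MeasurableSpace Ω] {P : Measure Ω}
  {Y : Fin S → Fin A → Fin A → Ω → ℕ}

lemma measureReal_sum_mul_abs_ge_le_exp_mul (hY : IsBTLSample v n P Y)
    (hint : ∀ k i j, ∃ m : ℕ, (m : ℝ) = n * v.N k i j) (hn : 0 < n) (a : v.Sampled → ℝ)
    {s : ℝ} (hs : 0 ≤ s) (Δ : ℝ) :
    P.real {ω | Δ ≤ ∑ t : v.Sampled, a t *
        |v.B n (fun k i j => Y k i j ω) t.1.1 t.1.2.1 t.1.2.2 -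
          sigmoid (v.r t.1.1 t.1.2.1 - v.r t.1.1 t.1.2.2)|} ≤
      exp (-s * Δ) * (2 ^ Fintype.card v.Sampled *
        exp (s ^ 2 * (∑ t : v.Sampled, a t ^ 2 / v.N t.1.1 t.1.2.1 t.1.2.2) / n)) := by
  have := hY.2.2.isProbabilityMeasure
  let m : v.Sampled → ℕ := fun t => ⌈(n : ℝ) * v.N t.1.1 t.1.2.1 t.1.2.2⌉₊
  have hm : ∀ t, (m t : ℝ) = n * v.N t.1.1 t.1.2.1 t.1.2.2 := fun t => by
    obtain ⟨m', hm'⟩ := hint t.1.1 t.1.2.1 t.1.2.2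
    simp only [m, ← hm', Nat.ceil_natCast]
  have hm0 : ∀ t, 0 < m t := fun t => by
    have : (0 : ℝ) < m t := (hm t).symm ▸ mul_pos (Nat.cast_pos.2 hn) t.2
    exact_mod_cast this
  let p : v.Sampled → ℝ := fun t => sigmoid (v.r t.1.1 t.1.2.1 - v.r t.1.1 t.1.2.2)
  have hp0 : ∀ t, 0 ≤ p t := fun t => by
    simp only [p, sigmoid_eq_real_sigmoid, Real.sigmoid_nonneg]
  have hp1 : ∀ t, p t ≤ 1 := fun t => by
    simp only [p, sigmoid_eq_real_sigmoid, Real.sigmoid_le_one]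
  have hlaw : ∀ t, HasBinomialLaw P (Y t.1.1 t.1.2.1 t.1.2.2) (m t) (p t) :=
    fun t => hY.2.1 _ _ _ t.2
  have hB : ∀ ω t, v.B n (fun k i j => Y k i j ω) t.1.1 t.1.2.1 t.1.2.2 =
      (Y t.1.1 t.1.2.1 t.1.2.2 ω : ℝ) / m t := fun ω t => by
    rw [Inst.B, if_pos t.2, hm]
  have hindep : iIndepFun (fun t ω => a t * |(Y t.1.1 t.1.2.1 t.1.2.2 ω : ℝ) / m t - p t|) P :=
    hY.2.2.comp (fun t x => a t * |x / m t - p t|) fun t => by fun_prop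
  have hsum : ∑ t : v.Sampled, (s * a t) ^ 2 / m t =
      s ^ 2 * (∑ t : v.Sampled, a t ^ 2 / v.N t.1.1 t.1.2.1 t.1.2.2) / n := by
    rw [mul_sum, sum_div]
    refine sum_congr rfl fun t _ => ?_
    have := t.2.ne'
    rw [hm]
    field_simp
  simp only [hB]
  refine (measureReal_sum_ge_le_of_iIndepFun hindep
    (fun t => (measurable_from_nat (f := fun y : ℕ => a t * |(y : ℝ) / m t - p t|)).comp
      (hY.1 _ _ _)) hs
    (fun t => (hlaw t).integrable_comp (hY.1 _ _ _)
      fun y => exp (s * (a t * |(y : ℝ) / m t - p t|)))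
    (fun t => (hlaw t).mgf_mul_abs_div_sub_le (hY.1 _ _ _) (hp0 t) (hp1 t) (hm0 t) (a t) s)
    Δ).trans_eq ?_
  rw [prod_mul_distrib, prod_const, card_univ, ← Real.exp_sum, hsum]

lemma measureReal_sum_mul_abs_ge_le (hY : IsBTLSample v n P Y)
    (hint : ∀ k i j, ∃ m : ℕ, (m : ℝ) = n * v.N k i j) (hn : 0 < n) {a : v.Sampled → ℝ}
    (hV : 0 < ∑ t : v.Sampled, a t ^ 2 / v.N t.1.1 t.1.2.1 t.1.2.2) {Δ : ℝ} (hΔ : 0 ≤ Δ) :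
    P.real {ω | Δ ≤ ∑ t : v.Sampled, a t *
        |v.B n (fun k i j => Y k i j ω) t.1.1 t.1.2.1 t.1.2.2 -
          sigmoid (v.r t.1.1 t.1.2.1 - v.r t.1.1 t.1.2.2)|} ≤
      2 ^ Fintype.card v.Sampled *
        exp (-(n * Δ ^ 2 / (4 * ∑ t : v.Sampled, a t ^ 2 / v.N t.1.1 t.1.2.1 t.1.2.2))) := by
  set V := ∑ t : v.Sampled, a t ^ 2 / v.N t.1.1 t.1.2.1 t.1.2.2
  refine (hY.measureReal_sum_mul_abs_ge_le_exp_mul hint hn a (s := n * Δ / (2 * V))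
    (by positivity) Δ).trans_eq ?_
  rw [mul_left_comm, ← Real.exp_add]
  congr 2
  field_simp
  ring

lemma measureReal_ihat_eq_le {L : ℝ} (hY : IsBTLSample v n P Y)
    (hint : ∀ k i j, ∃ m : ℕ, (m : ℝ) = n * v.N k i j) (hn : 0 < n)
    (hr : ∀ k i, |v.r k i| ≤ L) {istar : Fin S → Fin A} (hbest : v.BestAction istar)
    {w : Fin S → Fin A → Fin A → Fin S → Fin A → Fin A → ℝ} {k : Fin S} {i : Fin A}
    (hki : i ≠ istar k) (hfeas : v.Feasible k i (istar k) (w k i (istar k)))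
    {ihat : Ω → Fin S → Fin A}
    (hopt : ∀ ω k j, j ≠ ihat ω k →
      0 ≤ v.rhat L n w (fun k' i' j' => Y k' i' j' ω) k (ihat ω k) j) :
    P.real {ω | ihat ω k = i} ≤ 2 ^ Fintype.card v.Sampled *
      exp (-(n / (4 * (2 * (1 + exp (2 * L))) ^ 2 * v.H istar w))) := by
  have := hY.2.2.isProbabilityMeasure
  set M := 2 * (1 + exp (2 * L))
  set γ := v.cost (w k i (istar k)) with hγ_def
  set Δ := v.gap istar k i
  have hγ : 0 < γ := hfeas.cost_pos hki
  have hΔ : 0 < Δ := sub_pos.2 (hbest k i hki)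
  have hV : ∑ t : v.Sampled, (M * |w k i (istar k) t.1.1 t.1.2.1 t.1.2.2|) ^ 2 /
      v.N t.1.1 t.1.2.1 t.1.2.2 = M ^ 2 * γ := by
    rw [hγ_def, Inst.cost_eq_sum_sampled, mul_sum]
    exact sum_congr rfl fun t _ => by rw [mul_pow, sq_abs, mul_div_assoc]
  have hsub : {ω | ihat ω k = i} ⊆ {ω | Δ ≤ ∑ t : v.Sampled,
      M * |w k i (istar k) t.1.1 t.1.2.1 t.1.2.2| *
        |v.B n (fun k i j => Y k i j ω) t.1.1 t.1.2.1 t.1.2.2 -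
          sigmoid (v.r t.1.1 t.1.2.1 - v.r t.1.1 t.1.2.2)|} := by
    intro ω (hω : ihat ω k = i)
    have h := hopt ω k (istar k) (hω ▸ hki.symm)
    rw [hω, Inst.rhat, if_neg hki] at h
    exact hfeas.r_sub_r_le hr _ h
  have hrate : n / (4 * M ^ 2 * v.H istar w) ≤ n * Δ ^ 2 / (4 * (M ^ 2 * γ)) := by
    have hq : 0 < γ / Δ ^ 2 := div_pos hγ (pow_pos hΔ 2)
    calc n / (4 * M ^ 2 * v.H istar w) ≤ n / (4 * M ^ 2 * (γ / Δ ^ 2)) :=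
          div_le_div_of_nonneg_left (Nat.cast_nonneg n) (by positivity)
            (by gcongr; exact Inst.cost_div_gap_sq_le_H istar w hki)
      _ = n * Δ ^ 2 / (4 * (M ^ 2 * γ)) := by field_simp
  calc P.real {ω | ihat ω k = i} ≤ P.real {ω | Δ ≤ ∑ t : v.Sampled,
      M * |w k i (istar k) t.1.1 t.1.2.1 t.1.2.2| *
        |v.B n (fun k i j => Y k i j ω) t.1.1 t.1.2.1 t.1.2.2 -
          sigmoid (v.r t.1.1 t.1.2.1 - v.r t.1.1 t.1.2.2)|} := measureReal_mono hsub
    _ ≤ 2 ^ Fintype.card v.Sampled * exp (-(n * Δ ^ 2 / (4 * (M ^ 2 * γ)))) := by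
        rw [← hV]
        exact hY.measureReal_sum_mul_abs_ge_le hint hn (hV ▸ by positivity) hΔ.le
    _ ≤ _ := mul_le_mul_of_nonneg_left (Real.exp_le_exp.2 (neg_le_neg hrate)) (by positivity)

end IsBTLSample

end RLHF

theorem rl_low_instance_dependent_upper_bound_general (L : ℝ) :
    ∃ Cup : ℝ, 0 < Cup ∧
      ∀ (S A d : ℕ), 2 ≤ A →
      ∀ v : Inst S A d, (∀ k i, |v.r k i| ≤ L) → v.Consistent →
      ∀ istar : Fin S → Fin A, v.BestAction istar →
      ∀ w : Fin S → Fin A → Fin A → Fin S → Fin A → Fin A → ℝ,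
        (∀ k i j, i ≠ j → v.IsLOW k i j (w k i j)) →
      ∃ n₀ : ℕ, ∀ n : ℕ, n₀ ≤ n →
        (∀ k i j, ∃ m : ℕ, (m : ℝ) = n * v.N k i j) →
        ∀ (Ω : Type) [MeasurableSpace Ω] (P : MeasureTheory.Measure Ω),
          MeasureTheory.IsProbabilityMeasure P →
        ∀ Y : Fin S → Fin A → Fin A → Ω → ℕ, IsBTLSample v n P Y →
        ∀ ihat : Ω → Fin S → Fin A,
          (∀ k a, MeasurableSet {ω | ihat ω k = a}) →
          (∀ ω k j, j ≠ ihat ω k →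
            0 ≤ v.rhat L n w (fun k' i' j' => Y k' i' j' ω) k (ihat ω k) j) →
          ∫ ω, v.regret istar (ihat ω) ∂P ≤
            Real.exp (-(n : ℝ) / (Cup * v.H istar w)) := by
  set M := 2 * (1 + exp (2 * L))
  refine ⟨8 * M ^ 2, by positivity, ?_⟩
  intro S A d hA v hr _ istar hbest w hw
  have hfeas : ∀ k i, i ≠ istar k → v.Feasible k i (istar k) (w k i (istar k)) :=
    fun k i hki => (hw k i (istar k) hki).1
  have hH := v.H_pos hA hbest hfeas
  obtain ⟨k₀⟩ := v.nonempty_state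
  have hL : 0 ≤ L := (abs_nonneg _).trans (hr k₀ (istar k₀))
  set K : ℝ := 2 * L * A * 2 ^ Fintype.card v.Sampled
  refine ⟨⌈8 * M ^ 2 * v.H istar w * log K⌉₊ + 1,
    fun n hn hint Ω _ P _ Y hY ihat hmeas hopt => ?_⟩
  have hlogK : 2 * log K ≤ n / (4 * M ^ 2 * v.H istar w) := by
    rw [le_div_iff₀ (by positivity)]
    have := (Nat.le_ceil _).trans (Nat.cast_le.2 ((Nat.le_succ _).trans hn))
    linarith
  calc ∫ ω, v.regret istar (ihat ω) ∂P
      ≤ 2 * L * A * (2 ^ Fintype.card v.Sampled * exp (-(n / (4 * M ^ 2 * v.H istar w)))) :=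
        Inst.integral_regret_le hr hbest hmeas (by positivity) fun k i hki =>
          hY.measureReal_ihat_eq_le hint (by omega) hr hbest hki (hfeas k i hki) hopt
    _ = K * exp (-(n / (4 * M ^ 2 * v.H istar w))) := by ring
    _ ≤ exp (-(n / (4 * M ^ 2 * v.H istar w) / 2)) :=
        mul_exp_neg_le_exp_neg_half (by positivity) hlogK
    _ = exp (-n / (8 * M ^ 2 * v.H istar w)) := by ring_nf

/-- **Theorem 1 (Instance-dependent upper bound for RL-LOW).**
There exists a constant `C_up > 0` depending only on `L` such that for every consistent
instance `v` there is a threshold `n₀` such that for every `n ≥ n₀` with `n·N_{k,i,j} ∈ ℕ`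
and every measurable choice of outputs `î_k ∈ Î_k`, the expected simple regret of RL-LOW
satisfies `E[R_n] ≤ exp(−n/(C_up·H(v)))`. -/
theorem rl_low_instance_dependent_upper_bound (L : ℝ) (hL : 0 < L) :
    ∃ Cup : ℝ, 0 < Cup ∧
      ∀ (S A d : ℕ), 2 ≤ A →
      ∀ v : Inst S A d, (∀ k i, |v.r k i| ≤ L) → v.Consistent →
      ∀ istar : Fin S → Fin A, v.BestAction istar →
      ∀ w : Fin S → Fin A → Fin A → Fin S → Fin A → Fin A → ℝ,
        (∀ k i j, i ≠ j → v.IsLOW k i j (w k i j)) →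
      ∃ n₀ : ℕ, ∀ n : ℕ, n₀ ≤ n →
        (∀ k i j, ∃ m : ℕ, (m : ℝ) = n * v.N k i j) →
        ∀ (Ω : Type) [MeasurableSpace Ω] (P : MeasureTheory.Measure Ω),
          MeasureTheory.IsProbabilityMeasure P →
        ∀ Y : Fin S → Fin A → Fin A → Ω → ℕ, IsBTLSample v n P Y →
        ∀ ihat : Ω → Fin S → Fin A,
          (∀ k a, MeasurableSet {ω | ihat ω k = a}) →
          (∀ ω k j, j ≠ ihat ω k →
            0 ≤ v.rhat L n w (fun k' i' j' => Y k' i' j' ω) k (ihat ω k) j) →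
          ∫ ω, v.regret istar (ihat ω) ∂P ≤
            Real.exp (-(n : ℝ) / (Cup * v.H istar w)) :=
  rl_low_instance_dependent_upper_bound_general L
end

section
/- Bias of the clipped logit of a binomial proportion (Lemma F.1): Fix β ∈ (1/2, 1), n ∈ ℕ with n ≥ 1, and p ∈ [1−β, β]. Let Y_n ~ Binomial(n, p) and X_n = Y_n/n. Then |E[f(X_n)] − f(E[X_n])| ≤ 3/((1−β)^4·√n). -/
/-!
The clipped logit `flog β` is the logit `x ↦ log (x / (1 - x))` precomposed with the projection
onto `[1 - β, β]`, where the logit is `2 / (1 - β)`-Lipschitz. Hence the bias is at most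
`2 / (1 - β) · E|X_n - p| ≤ 2 / (1 - β) · √(Var X_n) = 2 / (1 - β) · √(p (1 - p) / n)`,
which is at most `1 / ((1 - β) √n)`. The mean and variance of the binomial law come from the
Bernstein polynomial identities, the binomial weights being the Bernstein polynomials at `p`.
-/

open MeasureTheory ProbabilityTheory

/-- The clipped logit function `f` of Lemma F.1: `f(x) = log(x/(1−x))` on `(1−β, β)`,
clamped to its boundary values outside. -/
noncomputable def flog (β x : ℝ) : ℝ :=
  if x ≤ 1 - β then Real.log ((1 - β) / β)
  else if β ≤ x then Real.log (β / (1 - β))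
  else Real.log (x / (1 - x))

/-- `Y` has the binomial law with `m` trials and success probability `p` under `P`. -/
def HasBinomialLaw {Ω : Type*} [MeasurableSpace Ω] (P : Measure Ω)
    (Y : Ω → ℕ) (m : ℕ) (p : ℝ) : Prop :=
  ∀ t : ℕ, P {ω | Y ω = t} =
    ENNReal.ofReal ((m.choose t : ℝ) * p ^ t * (1 - p) ^ (m - t))

open Set Real unitInterval
open scoped NNReal

lemma abs_log_sub_log_le {a u v : ℝ} (ha : 0 < a) (hu : a ≤ u) (hv : a ≤ v) :
    |log u - log v| ≤ |u - v| / a := by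
  wlog h : v ≤ u generalizing u v
  · rw [abs_sub_comm, abs_sub_comm u]
    exact this hv hu (le_of_not_ge h)
  have hv0 : 0 < v := ha.trans_le hv
  rw [abs_of_nonneg (sub_nonneg.2 (log_le_log hv0 h)), abs_of_nonneg (sub_nonneg.2 h),
    ← log_div (ha.trans_le hu).ne' hv0.ne']
  calc log (u / v) ≤ u / v - 1 := log_le_sub_one_of_pos (div_pos (ha.trans_le hu) hv0)
    _ = (u - v) / v := by field_simp
    _ ≤ (u - v) / a := div_le_div_of_nonneg_left (sub_nonneg.2 h) ha hv

lemma abs_logit_sub_logit_le {a u v : ℝ} (ha : 0 < a) (hu : u ∈ Icc a (1 - a))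
    (hv : v ∈ Icc a (1 - a)) :
    |log (u / (1 - u)) - log (v / (1 - v))| ≤ 2 / a * |u - v| := by
  obtain ⟨hu₁, hu₂⟩ := hu
  obtain ⟨hv₁, hv₂⟩ := hv
  rw [log_div (by linarith) (by linarith), log_div (by linarith) (by linarith)]
  have hlog := abs_log_sub_log_le ha hu₁ hv₁
  have hlog₁ := abs_log_sub_log_le ha (by linarith : a ≤ 1 - u) (by linarith : a ≤ 1 - v)
  rw [show 1 - u - (1 - v) = -(u - v) by ring, abs_neg] at hlog₁
  calc _ ≤ |log u - log v| + |log (1 - u) - log (1 - v)| := by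
        rw [show log u - log (1 - u) - (log v - log (1 - v))
          = (log u - log v) - (log (1 - u) - log (1 - v)) by ring]
        exact abs_sub _ _
    _ ≤ |u - v| / a + |u - v| / a := add_le_add hlog hlog₁
    _ = 2 / a * |u - v| := by ring

lemma flog_eq_IccExtend {β : ℝ} (hβ : 1 - β ≤ β) :
    flog β = IccExtend hβ (fun c ↦ log (c / (1 - c))) := by
  funext x
  rw [IccExtend_apply, flog]
  dsimp only
  split_ifs with h₁ h₂
  · rw [min_eq_right (h₁.trans hβ), max_eq_left h₁, sub_sub_cancel]
  · rw [min_eq_left h₂, max_eq_right hβ]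
  · rw [min_eq_right (not_le.1 h₂).le, max_eq_right (not_le.1 h₁).le]

lemma lipschitzWith_flog {β : ℝ} (hβ : β ∈ Ioo (1 / 2) 1) :
    LipschitzWith (2 / (1 - β)).toNNReal (flog β) := by
  have hβ' : 1 - β ≤ β := by linarith [hβ.1]
  have hlogit : LipschitzWith (2 / (1 - β)).toNNReal
      (fun c : Icc (1 - β) β ↦ log (c / (1 - c))) := by
    refine LipschitzWith.of_dist_le_mul fun u v ↦ ?_
    rw [Real.coe_toNNReal _ (div_nonneg zero_le_two (by linarith [hβ.2])), Real.dist_eq,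
      Subtype.dist_eq, Real.dist_eq]
    refine abs_logit_sub_logit_le (by linarith [hβ.2]) ?_ ?_ <;>
      simpa only [sub_sub_cancel] using Subtype.prop _
  rw [flog_eq_IccExtend hβ', ← mul_one (2 / (1 - β)).toNNReal]
  exact hlogit.comp (LipschitzWith.projIcc hβ')

section

variable {α : Type*} [MeasurableSpace α] {μ : Measure α} {g : α → ℝ}

lemma LipschitzWith.integrable_comp [IsFiniteMeasure μ] {f : ℝ → ℝ} {K : ℝ≥0}
    (hf : LipschitzWith K f) (hg : Integrable g μ) : Integrable (fun x ↦ f (g x)) μ := by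
  refine ((integrable_const |f 0|).add (hg.abs.const_mul K)).mono'
    (hf.continuous.comp_aestronglyMeasurable hg.1) (ae_of_all _ fun x ↦ ?_)
  have := hf.dist_le_mul (g x) 0
  rw [Real.dist_eq, Real.dist_eq, sub_zero] at this
  rw [Real.norm_eq_abs, Pi.add_apply]
  linarith [abs_sub_abs_le_abs_sub (f (g x)) (f 0)]

variable [IsProbabilityMeasure μ]

lemma integral_abs_sub_integral_le_sqrt_variance (hg : MemLp g 2 μ) :
    ∫ x, |g x - μ[g]| ∂μ ≤ √Var[g; μ] := by
  have hdev : MemLp (fun x ↦ |g x - μ[g]|) 2 μ := (hg.sub (memLp_const _)).abs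
  refine le_sqrt_of_sq_le ?_
  have hvar := variance_eq_sub hdev
  simp only [Pi.pow_apply, sq_abs] at hvar
  rw [variance_eq_integral hg.aemeasurable]
  linarith [variance_nonneg (fun x ↦ |g x - μ[g]|) μ]

lemma LipschitzWith.abs_integral_comp_sub_comp_integral_le {f : ℝ → ℝ} {K : ℝ≥0}
    (hf : LipschitzWith K f) (hg : MemLp g 2 μ) :
    |∫ x, f (g x) ∂μ - f μ[g]| ≤ K * √Var[g; μ] := by
  have hg₁ : Integrable g μ := hg.integrable one_le_two
  calc |∫ x, f (g x) ∂μ - f μ[g]| = |∫ x, (f (g x) - f μ[g]) ∂μ| := by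
        rw [integral_sub (hf.integrable_comp hg₁) (integrable_const _), integral_const,
          probReal_univ, one_smul]
    _ ≤ ∫ x, |f (g x) - f μ[g]| ∂μ := abs_integral_le_integral_abs
    _ ≤ ∫ x, K * |g x - μ[g]| ∂μ := by
        refine integral_mono_of_nonneg (ae_of_all _ fun _ ↦ abs_nonneg _)
          ((hg₁.sub (integrable_const _)).abs.const_mul _) (ae_of_all _ fun x ↦ ?_)
        simpa only [Real.dist_eq] using hf.dist_le_mul (g x) μ[g]
    _ ≤ K * √Var[g; μ] := by
        rw [integral_const_mul]
        exact mul_le_mul_of_nonneg_left (integral_abs_sub_integral_le_sqrt_variance hg) K.2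

end

lemma HasBinomialLaw.hasLaw {Ω : Type*} [MeasurableSpace Ω] {P : Measure Ω} {Y : Ω → ℕ} {n : ℕ}
    {p : ℝ} (hp : p ∈ I) (hY : Measurable Y) (hlaw : HasBinomialLaw P Y n p) :
    HasLaw Y Bin(n, ⟨p, hp⟩) P where
  aemeasurable := hY.aemeasurable
  map_eq := Measure.ext_of_singleton fun k ↦ by
    rw [Measure.map_apply hY (measurableSet_singleton k), binomial_singleton]
    exact hlaw k

namespace ProbabilityTheory

variable {n : ℕ} {p : I}

lemma memLp_binomial (f : ℕ → ℝ) : MemLp f 2 Bin(n, p) :=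
  (memLp_two_iff_integrable_sq .of_discrete).2 (integrable_binomial _)

lemma integral_natCast_binomial : ∫ k, (k : ℝ) ∂Bin(n, p) = n * p := by
  have := congrArg (Polynomial.eval (p : ℝ)) (bernsteinPolynomial.sum_smul ℝ n)
  simp only [Polynomial.eval_finsetSum, nsmul_eq_mul, bernsteinPolynomial,
    Polynomial.eval_mul, Polynomial.eval_pow, Polynomial.eval_sub, Polynomial.eval_natCast,
    Polynomial.eval_X, Polynomial.eval_one] at this
  rw [integral_binomial, ← Nat.range_succ_eq_Iic, ← this]
  simp only [smul_eq_mul]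
  exact Finset.sum_congr rfl fun k _ ↦ by ring

lemma variance_natCast_binomial : Var[fun k : ℕ ↦ (k : ℝ); Bin(n, p)] = n * p * (1 - p) := by
  have := congrArg (Polynomial.eval (p : ℝ)) (bernsteinPolynomial.variance ℝ n)
  simp only [Polynomial.eval_finsetSum, nsmul_eq_mul, bernsteinPolynomial,
    Polynomial.eval_mul, Polynomial.eval_pow, Polynomial.eval_sub, Polynomial.eval_natCast,
    Polynomial.eval_X, Polynomial.eval_one] at this
  rw [variance_eq_integral .of_discrete, integral_natCast_binomial, integral_binomial,
    ← Nat.range_succ_eq_Iic, ← this]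
  simp only [smul_eq_mul]
  exact Finset.sum_congr rfl fun k _ ↦ by ring

lemma integral_div_binomial (hn : n ≠ 0) : ∫ k, (k : ℝ) / n ∂Bin(n, p) = p := by
  rw [integral_div, integral_natCast_binomial]
  field_simp

lemma variance_div_binomial (hn : n ≠ 0) :
    Var[fun k : ℕ ↦ (k : ℝ) / n; Bin(n, p)] = p * (1 - p) / n := by
  simp_rw [div_eq_inv_mul (b := (n : ℝ))]
  rw [variance_const_mul, variance_natCast_binomial]
  field_simp

end ProbabilityTheory

theorem binomial_clipped_logit_bias_general (β : ℝ) (hβ : β ∈ Set.Ioo (1 / 2 : ℝ) 1)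
    (n : ℕ) (hn : 1 ≤ n) (p : ℝ) (hp : p ∈ Set.Icc (1 - β) β)
    (Ω : Type) [MeasurableSpace Ω] (P : Measure Ω)
    (Y : Ω → ℕ) (hY : Measurable Y) (hlaw : HasBinomialLaw P Y n p) :
    |(∫ ω, flog β ((Y ω : ℝ) / n) ∂P) - flog β (∫ ω, (Y ω : ℝ) / n ∂P)| ≤
      3 / ((1 - β) ^ 4 * Real.sqrt n) := by
  have hβ₀ : 0 < 1 - β := by linarith [hβ.2]
  have hp₀ : p ∈ I := ⟨hβ₀.le.trans hp.1, hp.2.trans hβ.2.le⟩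
  have hn₀ : (0 : ℝ) < n := by exact_mod_cast hn
  have hY' := hlaw.hasLaw hp₀ hY
  have hmean := hY'.integral_comp (f := fun k : ℕ ↦ (k : ℝ) / n) .of_discrete
  have hflog := hY'.integral_comp (f := fun k : ℕ ↦ flog β (k / n)) .of_discrete
  simp only [Function.comp_def] at hmean hflog
  have hsd : √(p * (1 - p) / n) ≤ 1 / (2 * √n) := by
    rw [sqrt_le_left (by positivity), div_pow, mul_pow, sq_sqrt hn₀.le,
      div_le_div_iff₀ hn₀ (by positivity)]
    nlinarith [sq_nonneg (p - 1 / 2)]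
  rw [hmean, hflog]
  calc _ ≤ (2 / (1 - β)).toNNReal * √Var[fun k : ℕ ↦ (k : ℝ) / n; Bin(n, ⟨p, hp₀⟩)] :=
        (lipschitzWith_flog hβ).abs_integral_comp_sub_comp_integral_le (memLp_binomial _)
    _ = 2 / (1 - β) * √(p * (1 - p) / n) := by
        rw [coe_toNNReal _ (by positivity), variance_div_binomial (by omega)]
    _ ≤ 2 / (1 - β) * (1 / (2 * √n)) := by gcongr
    _ ≤ 3 / ((1 - β) ^ 4 * √n) := by
        have hβ₁ : (1 - β) ^ 3 ≤ 1 := pow_le_one₀ hβ₀.le (by linarith [hβ.1])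
        rw [div_mul_div_comm, div_le_div_iff₀ (by positivity) (by positivity)]
        have := mul_le_mul_of_nonneg_right hβ₁ (mul_pos hβ₀ (sqrt_pos.2 hn₀)).le
        nlinarith [mul_pos hβ₀ (sqrt_pos.2 hn₀)]

/-- **Lemma F.1 (Bias of the clipped logit of a binomial proportion).**
Fix `β ∈ (1/2, 1)`, `n ≥ 1` and `p ∈ [1−β, β]`. If `Y_n ~ Binomial(n, p)` and
`X_n = Y_n/n`, then `|E[f(X_n)] − f(E[X_n])| ≤ 3/((1−β)⁴·√n)`. -/
theorem binomial_clipped_logit_bias (β : ℝ) (hβ : β ∈ Set.Ioo (1 / 2 : ℝ) 1)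
    (n : ℕ) (hn : 1 ≤ n) (p : ℝ) (hp : p ∈ Set.Icc (1 - β) β)
    (Ω : Type) [MeasurableSpace Ω] (P : Measure Ω) [IsProbabilityMeasure P]
    (Y : Ω → ℕ) (hY : Measurable Y) (hlaw : HasBinomialLaw P Y n p) :
    |(∫ ω, flog β ((Y ω : ℝ) / n) ∂P) - flog β (∫ ω, (Y ω : ℝ) / n ∂P)| ≤
      3 / ((1 - β) ^ 4 * Real.sqrt n) :=
  binomial_clipped_logit_bias_general β hβ n hn p hp Ω P Y hY hlaw
end
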